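/- Consider n = 1 + 1/ε independent Bernoulli variables where x₁ is active with probability 1-ε and x₂,…,x_n are each active with probability 1-ε². Let R be the strategy: test x₁; if x₁ = 0, test x₂, x₃, … until a second inactive variable is found or all are tested; if x₁ = 1, stop. Then the expected number of tests of R is at most 2, and the probability that R observes at least two inactive variables is at least ε²·(1-ε). -/

import Mathlib

open Classical

lemma sum_prod_bool {n : ℕ} (f : Fin n → Bool → ℝ) :
    ∑ σ : Fin n → Bool, ∏ i, f i (σ i) = ∏ i, (f i false + f i true) := by
  have h := Finset.prod_univ_sum (fun _ : Fin n => (Finset.univ : Finset Bool)) f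
  rw [Fintype.piFinset_univ] at h
  rw [← h]
  exact Finset.prod_congr rfl fun i _ => by rw [Fintype.sum_bool]; ring

/-- The strategy `R` on the counterexample instance: `n = 1 + 1/ε` independent variables,
`x₀` active with probability `1-ε` and the rest with probability `1-ε²`. `R` tests `x₀`;
if inactive, it tests the remaining variables in order until a second inactive variable is
found or all are tested. Its expected number of tests is at most `2`, and it observes at
least two inactive variables with probability at least `ε²·(1-ε)`. -/
theorem stmt13 (ε : ℝ) (hε : 0 < ε) (n : ℕ) (hn : (n : ℝ) = 1 + 1/ε) (hn2 : 2 ≤ n)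
    (p : Fin n → ℝ) (hp0 : p ⟨0, by omega⟩ = 1 - ε)
    (hpj : ∀ j : Fin n, j.val ≠ 0 → p j = 1 - ε^2) :
    (∑ σ : Fin n → Bool, (∏ i, if σ i then p i else 1 - p i) *
        (((if σ ⟨0, by omega⟩ then 1 else 1 +
          (if h : (Finset.univ.filter (fun j : Fin n => j.val ≠ 0 ∧ σ j = false)).Nonempty
            then ((Finset.univ.filter
                (fun j : Fin n => j.val ≠ 0 ∧ σ j = false)).min' h).val
            else n - 1)) : ℕ) : ℝ)) ≤ 2 ∧
    ε^2 * (1 - ε) ≤ ∑ σ : Fin n → Bool, (∏ i, if σ i then p i else 1 - p i) *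
        (if σ ⟨0, by omega⟩ = false ∧ ∃ j : Fin n, j.val ≠ 0 ∧ σ j = false
          then (1:ℝ) else 0) := by
  set i0 : Fin n := ⟨0, by omega⟩ with hi0def
  have hεle1 : ε ≤ 1 := by
    have h2 : (2:ℝ) ≤ (n:ℝ) := by exact_mod_cast hn2
    have h1 : (1:ℝ) ≤ 1/ε := by linarith
    rw [le_div_iff₀ hε] at h1; linarith
  have hp_mem : ∀ i : Fin n, 0 ≤ p i ∧ p i ≤ 1 := by
    intro i
    by_cases h : i.val = 0
    · have : i = i0 := Fin.ext h
      rw [this, hp0]; constructor <;> nlinarith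
    · rw [hpj i h]; constructor <;> nlinarith
  set w : Fin n → Bool → ℝ := fun i b => if b then p i else 1 - p i with hw
  have hwnn : ∀ σ : Fin n → Bool, 0 ≤ ∏ i, w i (σ i) := by
    intro σ; apply Finset.prod_nonneg; intro i _
    rcases hp_mem i with ⟨h1, h2⟩
    cases hσ : σ i <;> simp [w] <;> linarith
  have hS1 : ∑ σ : Fin n → Bool, ∏ i, w i (σ i) = 1 := by
    rw [sum_prod_bool, Finset.prod_eq_one]
    intro i _; simp [w]
  have hSε : ∑ σ : Fin n → Bool,
      (∏ i, w i (σ i)) * (if σ i0 = false then (1:ℝ) else 0) = ε := by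
    have key : ∀ σ : Fin n → Bool, (∏ i, w i (σ i)) * (if σ i0 = false then (1:ℝ) else 0)
        = ∏ i, (w i (σ i) * (if i = i0 then (if σ i = false then (1:ℝ) else 0) else 1)) := by
      intro σ
      rw [Finset.prod_mul_distrib, Finset.prod_ite_eq']
      simp
    rw [Finset.sum_congr rfl (fun σ _ => key σ),
      sum_prod_bool (fun i b => w i b * (if i = i0 then (if b = false then (1:ℝ) else 0) else 1))]
    calc ∏ i : Fin n, (w i false * (if i = i0 then (if (false:Bool) = false then (1:ℝ) else 0) else 1)
            + w i true * (if i = i0 then (if (true:Bool) = false then (1:ℝ) else 0) else 1))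
        = ∏ i : Fin n, (if i = i0 then 1 - p i0 else 1) := by
          refine Finset.prod_congr rfl fun i _ => ?_
          by_cases h : i = i0 <;> simp [w, h]
      _ = 1 - p i0 := by rw [Finset.prod_ite_eq']; simp
      _ = ε := by rw [hp0]; ring
  have hSA : ∑ σ : Fin n → Bool, ∏ i, (w i (σ i) *
        (if i = i0 then (if σ i = false then (1:ℝ) else 0) else (if σ i = true then 1 else 0)))
      = ε * (1 - ε^2)^(n-1) := by
    rw [sum_prod_bool (fun i b => w i b *
        (if i = i0 then (if b = false then (1:ℝ) else 0) else (if b = true then 1 else 0)))]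
    have step : ∀ i : Fin n, (w i false * (if i = i0 then (if (false:Bool) = false then (1:ℝ) else 0) else (if (false:Bool) = true then 1 else 0))
            + w i true * (if i = i0 then (if (true:Bool) = false then (1:ℝ) else 0) else (if (true:Bool) = true then 1 else 0)))
        = if i = i0 then ε else 1 - ε^2 := by
      intro i
      by_cases h : i = i0
      · simp [w, h, hp0]
      · have hv : i.val ≠ 0 := fun hc => h (Fin.ext hc)
        simp [w, h, hpj i hv]
    rw [Finset.prod_congr rfl (fun i _ => step i)]
    rw [← Finset.mul_prod_erase Finset.univ _ (Finset.mem_univ i0)]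
    simp only [if_pos rfl]
    congr 1
    rw [Finset.prod_congr rfl (fun i hi => if_neg (Finset.ne_of_mem_erase hi)),
      Finset.prod_const, Finset.card_erase_of_mem (Finset.mem_univ i0),
      Finset.card_univ, Fintype.card_fin]
  constructor
  · -- Part 1: expected cost ≤ 2
    have hc : ∀ σ : Fin n → Bool,
        (((if σ i0 then 1 else 1 +
          (if h : (Finset.univ.filter (fun j : Fin n => j.val ≠ 0 ∧ σ j = false)).Nonempty
            then ((Finset.univ.filter
                (fun j : Fin n => j.val ≠ 0 ∧ σ j = false)).min' h).val
            else n - 1)) : ℕ) : ℝ)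
        ≤ 1 + ((n:ℝ) - 1) * (if σ i0 = false then 1 else 0) := by
      intro σ
      cases hσ : σ i0
      · simp only [hσ, if_pos rfl, Bool.false_eq_true, if_false]
        have he : (if h : (Finset.univ.filter (fun j : Fin n => j.val ≠ 0 ∧ σ j = false)).Nonempty
            then ((Finset.univ.filter
                (fun j : Fin n => j.val ≠ 0 ∧ σ j = false)).min' h).val
            else n - 1) ≤ n - 1 := by
          split
          · exact Nat.le_pred_of_lt (Fin.is_lt _)
          · exact le_refl _
        have hcast : (((1 + (if h : (Finset.univ.filter (fun j : Fin n => j.val ≠ 0 ∧ σ j = false)).Nonempty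
            then ((Finset.univ.filter
                (fun j : Fin n => j.val ≠ 0 ∧ σ j = false)).min' h).val
            else n - 1)) : ℕ) : ℝ) ≤ ((1 + (n-1) : ℕ) : ℝ) := by
          exact_mod_cast Nat.add_le_add_left he 1
        refine le_trans hcast ?_
        rw [Nat.cast_add, Nat.cast_sub (by omega)]
        norm_num
      · simp [hσ]
    calc (∑ σ : Fin n → Bool, (∏ i, w i (σ i)) *
        (((if σ i0 then 1 else 1 +
          (if h : (Finset.univ.filter (fun j : Fin n => j.val ≠ 0 ∧ σ j = false)).Nonempty
            then ((Finset.univ.filter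
                (fun j : Fin n => j.val ≠ 0 ∧ σ j = false)).min' h).val
            else n - 1)) : ℕ) : ℝ))
        ≤ ∑ σ : Fin n → Bool, (∏ i, w i (σ i)) *
            (1 + ((n:ℝ) - 1) * (if σ i0 = false then 1 else 0)) := by
          refine Finset.sum_le_sum fun σ _ => ?_
          exact mul_le_mul_of_nonneg_left (hc σ) (hwnn σ)
      _ = ∑ σ : Fin n → Bool, ((∏ i, w i (σ i))
            + ((n:ℝ) - 1) * ((∏ i, w i (σ i)) * (if σ i0 = false then 1 else 0))) := by
          refine Finset.sum_congr rfl fun σ _ => by ring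
      _ = 1 + ((n:ℝ) - 1) * ε := by
          rw [Finset.sum_add_distrib, hS1, ← Finset.mul_sum, hSε]
      _ ≤ 2 := by
          rw [hn]
          have : (1/ε) * ε = 1 := by field_simp
          nlinarith [this]
  · -- Part 2: success probability
    have point : ∀ σ : Fin n → Bool,
        (∏ i, w i (σ i)) * (if σ i0 = false ∧ ∃ j : Fin n, j.val ≠ 0 ∧ σ j = false then (1:ℝ) else 0)
        = (∏ i, w i (σ i)) * (if σ i0 = false then (1:ℝ) else 0)
          - ∏ i, (w i (σ i) *
            (if i = i0 then (if σ i = false then (1:ℝ) else 0) else (if σ i = true then 1 else 0))) := by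
      intro σ
      rw [Finset.prod_mul_distrib]
      have hB : (∏ i, (if i = i0 then (if σ i = false then (1:ℝ) else 0) else (if σ i = true then 1 else 0)))
          = if σ i0 = false ∧ ∀ j : Fin n, j.val ≠ 0 → σ j = true then (1:ℝ) else 0 := by
        by_cases hall : σ i0 = false ∧ ∀ j : Fin n, j.val ≠ 0 → σ j = true
        · rw [if_pos hall, Finset.prod_eq_one]
          intro i _
          by_cases h : i = i0
          · simp [h, hall.1]
          · have hv : i.val ≠ 0 := fun hc => h (Fin.ext hc)
            simp [h, hall.2 i hv]
        · rw [if_neg hall]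
          push_neg at hall
          by_cases h0 : σ i0 = false
          · obtain ⟨j, hj, hjf⟩ := hall h0
            refine Finset.prod_eq_zero (Finset.mem_univ j) ?_
            have hji : j ≠ i0 := fun hc => hj (by rw [hc])
            simp [hji, hjf]
          · refine Finset.prod_eq_zero (Finset.mem_univ i0) ?_
            simp at h0
            simp [h0]
      rw [hB]
      by_cases h0 : σ i0 = false
      · by_cases hex : ∃ j : Fin n, j.val ≠ 0 ∧ σ j = false
        · rw [if_pos ⟨h0, hex⟩, if_pos h0, if_neg]
          · ring
          · rintro ⟨-, hall⟩
            obtain ⟨j, hj, hjf⟩ := hex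
            rw [hall j hj] at hjf; exact Bool.true_eq_false.mp hjf
        · rw [if_neg (fun hc => hex hc.2), if_pos h0, if_pos]
          · ring
          · refine ⟨h0, fun j hj => ?_⟩
            by_contra hc
            exact hex ⟨j, hj, by simpa using hc⟩
      · rw [if_neg (fun hc => h0 hc.1), if_neg h0, if_neg (fun hc => h0 hc.1)]
        ring
    have hsum : ∑ σ : Fin n → Bool, (∏ i, w i (σ i)) *
        (if σ i0 = false ∧ ∃ j : Fin n, j.val ≠ 0 ∧ σ j = false then (1:ℝ) else 0)
        = ε - ε * (1 - ε^2)^(n-1) := by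
      rw [Finset.sum_congr rfl (fun σ _ => point σ), Finset.sum_sub_distrib, hSε, hSA]
    show ε^2 * (1 - ε) ≤ ∑ σ : Fin n → Bool, (∏ i, w i (σ i)) *
        (if σ i0 = false ∧ ∃ j : Fin n, j.val ≠ 0 ∧ σ j = false then (1:ℝ) else 0)
    rw [hsum]
    -- final inequality
    set m := n - 1 with hmdef
    have hmc : (m:ℝ) = 1/ε := by
      rw [hmdef, Nat.cast_sub (by omega)]
      rw [hn]; ring
    have he2 : ε^2 ≤ 1 := by nlinarith
    have hA0 : (0:ℝ) ≤ (1 - ε^2)^m := pow_nonneg (by linarith) m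
    have hber : (1:ℝ) + m * ε^2 ≤ (1 + ε^2)^m := by
      have := one_add_mul_le_pow (a := ε^2) (by nlinarith) m
      simpa using this
    have hme : (m:ℝ) * ε^2 = ε := by
      rw [hmc]; field_simp
    have hprod : (1 - ε^2)^m * (1 + ε^2)^m ≤ 1 := by
      rw [← mul_pow]
      exact pow_le_one₀ (by nlinarith) (by nlinarith)
    have h3 : (1:ℝ) + ε ≤ (1 + ε^2)^m := by linarith
    have hkey : (1 - ε^2)^m * (1 + ε) ≤ 1 :=
      le_trans (mul_le_mul_of_nonneg_left h3 hA0) hprod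
    nlinarith [hA0, sq_nonneg ε, sq_nonneg (1-ε)]
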